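/- arXiv:1709.03093 — 3 statements merged into one kernel-verified Lean document; each statement's English description precedes it below -/
import Mathlib

section
/- Let K ⊆ ℝ^d_+ be nonempty with ‖x‖ ≤ R for all x ∈ K, let 0 < α < 1, R > 0, and let O : ℝ^d_+ → K satisfy O(c)·c ≥ α·sup_{x∈K} x·c for every c ∈ ℝ^d_+. Fix c ∈ ℝ^d and set s = O(−c⁻) and v = O(−c⁻) − R·c̄⁺. Then: (1) v·c ≤ α·inf_{x∈K} x·c; (2) v ≤ s coordinatewise, and hence s·f ≥ v·f for every f ∈ ℝ^d_+; (3) ‖v‖ ≤ (α+2)R. -/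
open scoped RealInnerProductSpace

/-!
Let `s = O(-c⁻)`. The correction `-R·c̄⁺` costs exactly `R‖c⁺‖` in the direction `c`, which
dominates the gain `⟪s, c⁺⟫ ≤ ‖s‖‖c⁺‖ ≤ R‖c⁺‖`, so `⟪v, c⟫ ≤ ⟪s, c⁻⟫`. The oracle guarantee for
the nonnegative vector `-c⁻` gives `⟪s, c⁻⟫ ≤ α⟪x, c⁻⟫` for every `x ∈ K`, and `⟪x, c⁻⟫ ≤ ⟪x, c⟫`
because `K` lies in the nonnegative orthant. The other claims are immediate, since `c̄⁺ ≥ 0`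
and `‖c̄⁺‖ ≤ 1`.
-/

section InnerProductSpace

variable {E : Type*} [NormedAddCommGroup E] [InnerProductSpace ℝ E]

lemma mul_inner_le_of_mul_iSup_le {K : Set E} {R α : ℝ} (hKR : ∀ x ∈ K, ‖x‖ ≤ R)
    (hα : 0 ≤ α) {c y x : E} (hy : α * ⨆ z : K, ⟪(z : E), c⟫ ≤ ⟪y, c⟫) (hx : x ∈ K) :
    α * ⟪x, c⟫ ≤ ⟪y, c⟫ := by
  have hbdd : BddAbove (Set.range fun z : K => ⟪(z : E), c⟫) := by
    refine ⟨R * ‖c‖, ?_⟩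
    rintro _ ⟨z, rfl⟩
    exact (real_inner_le_norm _ _).trans (by gcongr; exact hKR _ z.2)
  exact (mul_le_mul_of_nonneg_left (le_ciSup hbdd ⟨x, hx⟩) hα).trans hy

lemma norm_smul_inv_norm_smul_le {R : ℝ} (hR : 0 ≤ R) (w : E) :
    ‖R • (‖w‖⁻¹ • w)‖ ≤ R := by
  rcases eq_or_ne w 0 with rfl | hw
  · simpa using hR
  · rw [norm_smul, norm_smul, norm_inv, norm_norm, inv_mul_cancel₀ (norm_ne_zero_iff.2 hw),
      Real.norm_of_nonneg hR, mul_one]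

lemma inner_smul_inv_norm_of_inner_eq_zero {cpos cneg : E} (horth : ⟪cpos, cneg⟫ = 0) :
    ⟪‖cpos‖⁻¹ • cpos, cpos + cneg⟫ = ‖cpos‖ := by
  rw [real_inner_smul_left, inner_add_right, horth, add_zero, real_inner_self_eq_norm_sq]
  rcases eq_or_ne ‖cpos‖ 0 with h | h
  · simp [h]
  · field_simp

lemma inner_sub_smul_unit_le {cpos cneg s : E} {R : ℝ} (horth : ⟪cpos, cneg⟫ = 0)
    (hs : ‖s‖ ≤ R) :
    ⟪s - R • (‖cpos‖⁻¹ • cpos), cpos + cneg⟫ ≤ ⟪s, cneg⟫ := by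
  have hs_cpos : ⟪s, cpos⟫ ≤ R * ‖cpos‖ :=
    (real_inner_le_norm s cpos).trans (by gcongr)
  rw [inner_sub_left, real_inner_smul_left, inner_smul_inv_norm_of_inner_eq_zero horth,
    inner_add_right]
  linarith

end InnerProductSpace

section Orthant

variable {ι : Type*}

lemma inner_nonneg_of_nonneg [Fintype ι] {x y : EuclideanSpace ℝ ι} (hx : ∀ i, 0 ≤ x i)
    (hy : ∀ i, 0 ≤ y i) : 0 ≤ ⟪x, y⟫ := by
  rw [PiLp.inner_apply]
  exact Finset.sum_nonneg fun i _ => mul_nonneg (hy i) (hx i)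

lemma inner_le_inner_of_le [Fintype ι] {x y f : EuclideanSpace ℝ ι} (hxy : ∀ i, x i ≤ y i)
    (hf : ∀ i, 0 ≤ f i) : ⟪x, f⟫ ≤ ⟪y, f⟫ := by
  have := inner_nonneg_of_nonneg (x := y - x) (fun i => by simpa using hxy i) hf
  rwa [inner_sub_left, sub_nonneg] at this

variable {c cpos cneg : EuclideanSpace ℝ ι}

lemma add_eq_of_max_min (hcpos : ∀ i, cpos i = max (c i) 0) (hcneg : ∀ i, cneg i = min (c i) 0) :
    cpos + cneg = c := by
  ext i
  simp [hcpos, hcneg, max_add_min]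

lemma inner_eq_zero_of_max_min [Fintype ι] (hcpos : ∀ i, cpos i = max (c i) 0)
    (hcneg : ∀ i, cneg i = min (c i) 0) : ⟪cpos, cneg⟫ = 0 := by
  rw [PiLp.inner_apply]
  refine Finset.sum_eq_zero fun i _ => ?_
  simp [hcpos, hcneg, mul_comm (min _ _), max_mul_min]

end Orthant

theorem extended_approximation_oracle_max_general {d : ℕ}
    (K : Set (EuclideanSpace ℝ (Fin d))) (R α : ℝ)
    (hKpos : ∀ x ∈ K, ∀ i, 0 ≤ x i)
    (hKR : ∀ x ∈ K, ‖x‖ ≤ R) (hα0 : 0 < α)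
    (O : EuclideanSpace ℝ (Fin d) → EuclideanSpace ℝ (Fin d))
    (hOmem : ∀ c : EuclideanSpace ℝ (Fin d), (∀ i, 0 ≤ c i) → O c ∈ K)
    (hOapx : ∀ c : EuclideanSpace ℝ (Fin d), (∀ i, 0 ≤ c i) →
      α * ⨆ x : K, ⟪(x : EuclideanSpace ℝ (Fin d)), c⟫ ≤ ⟪O c, c⟫)
    (c cpos cneg : EuclideanSpace ℝ (Fin d))
    (hcpos : ∀ i, cpos i = max (c i) 0)
    (hcneg : ∀ i, cneg i = min (c i) 0)
    (s v : EuclideanSpace ℝ (Fin d))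
    (hs : s = O (-cneg))
    (hv : v = O (-cneg) - R • (‖cpos‖⁻¹ • cpos)) :
    ⟪v, c⟫ ≤ α * ⨅ x : K, ⟪(x : EuclideanSpace ℝ (Fin d)), c⟫ ∧
    (∀ i, v i ≤ s i) ∧
    (∀ f : EuclideanSpace ℝ (Fin d), (∀ i, 0 ≤ f i) → ⟪v, f⟫ ≤ ⟪s, f⟫) ∧
    ‖v‖ ≤ (α + 2) * R := by
  have hcneg_nonneg : ∀ i, 0 ≤ (-cneg) i := fun i => by simp [hcneg]
  have hcpos_nonneg : ∀ i, 0 ≤ cpos i := fun i => by simp [hcpos]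
  have hsK : s ∈ K := hs ▸ hOmem _ hcneg_nonneg
  have hR : 0 ≤ R := (norm_nonneg s).trans (hKR s hsK)
  rw [← hs] at hv
  have hc := add_eq_of_max_min hcpos hcneg
  have hv_le : ∀ i, v i ≤ s i := fun i => by
    rw [hv]
    simpa using mul_nonneg hR (mul_nonneg (inv_nonneg.2 (norm_nonneg cpos)) (hcpos_nonneg i))
  refine ⟨?_, hv_le, fun f hf => inner_le_inner_of_le hv_le hf, ?_⟩
  · have : Nonempty K := ⟨⟨s, hsK⟩⟩
    rw [Real.mul_iInf_of_nonneg hα0.le]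
    refine le_ciInf fun ⟨x, hx⟩ => ?_
    have horacle := mul_inner_le_of_mul_iSup_le hKR hα0.le (hs ▸ hOapx _ hcneg_nonneg) hx
    rw [inner_neg_right, inner_neg_right] at horacle
    have hx_cpos := inner_nonneg_of_nonneg (hKpos x hx) hcpos_nonneg
    calc ⟪v, c⟫ ≤ ⟪s, cneg⟫ :=
          hv ▸ hc ▸ inner_sub_smul_unit_le (inner_eq_zero_of_max_min hcpos hcneg) (hKR s hsK)
      _ ≤ α * ⟪x, cneg⟫ := by linarith
      _ ≤ α * ⟪x, c⟫ := by
          rw [← hc, inner_add_right]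
          nlinarith
  · calc ‖v‖ ≤ ‖s‖ + ‖R • (‖cpos‖⁻¹ • cpos)‖ := hv ▸ norm_sub_le _ _
      _ ≤ R + R := add_le_add (hKR s hsK) (norm_smul_inv_norm_smul_le hR cpos)
      _ ≤ (α + 2) * R := by nlinarith

/-- The extended approximation oracle for payoff maximization (α < 1):
given an α-approximation oracle `O` for linear maximization over `K ⊆ ℝ^d_+`,
the point `v = O(−c⁻) − R·c̄⁺` satisfies the three stated properties. -/
theorem extended_approximation_oracle_max {d : ℕ}
    (K : Set (EuclideanSpace ℝ (Fin d))) (R α : ℝ)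
    (hK : K.Nonempty) (hKpos : ∀ x ∈ K, ∀ i, 0 ≤ x i)
    (hKR : ∀ x ∈ K, ‖x‖ ≤ R) (hα0 : 0 < α) (hα1 : α < 1) (hR : 0 < R)
    (O : EuclideanSpace ℝ (Fin d) → EuclideanSpace ℝ (Fin d))
    (hOmem : ∀ c : EuclideanSpace ℝ (Fin d), (∀ i, 0 ≤ c i) → O c ∈ K)
    (hOapx : ∀ c : EuclideanSpace ℝ (Fin d), (∀ i, 0 ≤ c i) →
      α * ⨆ x : K, ⟪(x : EuclideanSpace ℝ (Fin d)), c⟫ ≤ ⟪O c, c⟫)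
    (c cpos cneg : EuclideanSpace ℝ (Fin d))
    (hcpos : ∀ i, cpos i = max (c i) 0)
    (hcneg : ∀ i, cneg i = min (c i) 0)
    (s v : EuclideanSpace ℝ (Fin d))
    (hs : s = O (-cneg))
    (hv : v = O (-cneg) - R • (‖cpos‖⁻¹ • cpos)) :
    ⟪v, c⟫ ≤ α * ⨅ x : K, ⟪(x : EuclideanSpace ℝ (Fin d)), c⟫ ∧
    (∀ i, v i ≤ s i) ∧
    (∀ f : EuclideanSpace ℝ (Fin d), (∀ i, 0 ≤ f i) → ⟪v, f⟫ ≤ ⟪s, f⟫) ∧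
    ‖v‖ ≤ (α + 2) * R :=
  extended_approximation_oracle_max_general K R α hKpos hKR hα0 O hOmem hOapx c cpos cneg hcpos
    hcneg s v hs hv
end

section
/- Let S ⊆ ℝ^d, η > 0, T ≥ 1, and let x_1, …, x_{T+1} ∈ ℝ^d and f_1, …, f_T ∈ ℝ^d be sequences such that for every t ∈ {1,…,T} and every z ∈ S: ‖z − x_{t+1}‖² ≤ ‖z − (x_t + η f_t)‖². Then for every x ∈ S: (1/T)·Σ_{t=1}^T x·f_t − (1/T)·Σ_{t=1}^T x_t·f_t ≤ ‖x_1 − x‖²/(2Tη) + (η/(2T))·Σ_{t=1}^T ‖f_t‖². -/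
open scoped RealInnerProductSpace

lemma ogd_telescope (g : ℕ → ℝ) (T : ℕ) :
    ∑ t ∈ Finset.Icc 1 T, (g t - g (t + 1)) = g 1 - g (T + 1) := by
  induction T with
  | zero => simp
  | succ n ih =>
    rw [Finset.sum_Icc_succ_top (by omega), ih]
    ring

/-- Regret guarantee of online gradient descent without feasibility, for linear payoffs. -/
theorem ogd_without_feasibility_payoffs {d : ℕ}
    (S : Set (EuclideanSpace ℝ (Fin d))) (η : ℝ) (T : ℕ)
    (hη : 0 < η) (hT : 1 ≤ T)
    (x f : ℕ → EuclideanSpace ℝ (Fin d))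
    (hproj : ∀ t ∈ Finset.Icc 1 T, ∀ z ∈ S,
      ‖z - x (t + 1)‖ ^ 2 ≤ ‖z - (x t + η • f t)‖ ^ 2) :
    ∀ xs ∈ S,
      (1 / (T : ℝ)) * ∑ t ∈ Finset.Icc 1 T, ⟪xs, f t⟫ -
        (1 / (T : ℝ)) * ∑ t ∈ Finset.Icc 1 T, ⟪x t, f t⟫ ≤
      ‖x 1 - xs‖ ^ 2 / (2 * (T : ℝ) * η) +
        (η / (2 * (T : ℝ))) * ∑ t ∈ Finset.Icc 1 T, ‖f t‖ ^ 2 := by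
  intro xs hxs
  have hT0 : (0 : ℝ) < (T : ℝ) := by exact_mod_cast Nat.pos_of_ne_zero (by omega)
  -- per-step bound
  have key : ∀ t ∈ Finset.Icc 1 T,
      ⟪xs, f t⟫ - ⟪x t, f t⟫ ≤
        (‖xs - x t‖ ^ 2 - ‖xs - x (t + 1)‖ ^ 2) / (2 * η) + (η / 2) * ‖f t‖ ^ 2 := by
    intro t ht
    have h := hproj t ht xs hxs
    have hexp : ‖xs - (x t + η • f t)‖ ^ 2
        = ‖xs - x t‖ ^ 2 - 2 * η * ⟪xs - x t, f t⟫ + η ^ 2 * ‖f t‖ ^ 2 := by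
      have : xs - (x t + η • f t) = (xs - x t) - η • f t := by abel
      rw [this, norm_sub_sq_real, real_inner_smul_right, norm_smul]
      simp [abs_of_pos hη, mul_pow]
      ring
    have hlin : ⟪xs - x t, f t⟫ = ⟪xs, f t⟫ - ⟪x t, f t⟫ := by
      rw [inner_sub_left]
    rw [hexp, hlin] at h
    have h2 : 2 * η * (⟪xs, f t⟫ - ⟪x t, f t⟫)
        ≤ ‖xs - x t‖ ^ 2 - ‖xs - x (t + 1)‖ ^ 2 + η ^ 2 * ‖f t‖ ^ 2 := by linarith
    rw [div_add' _ _ _ (by positivity), le_div_iff₀ (by positivity)]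
    nlinarith [h2]
  -- sum the per-step bounds
  have hsum : ∑ t ∈ Finset.Icc 1 T, (⟪xs, f t⟫ - ⟪x t, f t⟫)
      ≤ ∑ t ∈ Finset.Icc 1 T,
        ((‖xs - x t‖ ^ 2 - ‖xs - x (t + 1)‖ ^ 2) / (2 * η) + (η / 2) * ‖f t‖ ^ 2) :=
    Finset.sum_le_sum key
  have htel : ∑ t ∈ Finset.Icc 1 T,
      ((‖xs - x t‖ ^ 2 - ‖xs - x (t + 1)‖ ^ 2) / (2 * η) + (η / 2) * ‖f t‖ ^ 2)
      = (‖xs - x 1‖ ^ 2 - ‖xs - x (T + 1)‖ ^ 2) / (2 * η)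
        + (η / 2) * ∑ t ∈ Finset.Icc 1 T, ‖f t‖ ^ 2 := by
    rw [Finset.sum_add_distrib, ← Finset.mul_sum, ← Finset.sum_div,
      ogd_telescope (fun t => ‖xs - x t‖ ^ 2) T]
  have hfinal : ∑ t ∈ Finset.Icc 1 T, (⟪xs, f t⟫ - ⟪x t, f t⟫)
      ≤ ‖x 1 - xs‖ ^ 2 / (2 * η) + (η / 2) * ∑ t ∈ Finset.Icc 1 T, ‖f t‖ ^ 2 := by
    rw [htel] at hsum
    have hnn : (0:ℝ) ≤ ‖xs - x (T + 1)‖ ^ 2 := by positivity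
    have : ‖xs - x 1‖ = ‖x 1 - xs‖ := norm_sub_rev _ _
    rw [this] at hsum
    have h2η : (0:ℝ) < 2 * η := by positivity
    calc ∑ t ∈ Finset.Icc 1 T, (⟪xs, f t⟫ - ⟪x t, f t⟫)
        ≤ (‖x 1 - xs‖ ^ 2 - ‖xs - x (T + 1)‖ ^ 2) / (2 * η)
          + (η / 2) * ∑ t ∈ Finset.Icc 1 T, ‖f t‖ ^ 2 := hsum
      _ ≤ ‖x 1 - xs‖ ^ 2 / (2 * η) + (η / 2) * ∑ t ∈ Finset.Icc 1 T, ‖f t‖ ^ 2 := by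
          gcongr
          linarith
  rw [← mul_sub, ← Finset.sum_sub_distrib]
  have := mul_le_mul_of_nonneg_left hfinal (le_of_lt (by positivity : (0:ℝ) < 1 / (T:ℝ)))
  calc (1 / (T:ℝ)) * ∑ t ∈ Finset.Icc 1 T, (⟪xs, f t⟫ - ⟪x t, f t⟫)
      ≤ (1 / (T:ℝ)) * (‖x 1 - xs‖ ^ 2 / (2 * η) + (η / 2) * ∑ t ∈ Finset.Icc 1 T, ‖f t‖ ^ 2) := this
    _ = ‖x 1 - xs‖ ^ 2 / (2 * (T : ℝ) * η) + (η / (2 * (T : ℝ))) * ∑ t ∈ Finset.Icc 1 T, ‖f t‖ ^ 2 := by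
        field_simp
end

section
/- Let α, R, F ≥ 0, η ≥ 0, ε > 0 and T ≥ 2. Let D_1, …, D_T be nonnegative reals and k_1, …, k_{T−1} be nonnegative integers such that D_1 = 0, D_t ≤ √2·αR for all t ∈ {1,…,T}, and D_{t+1}² ≤ (D_t + ηF)² − (k_t − 1)ε² for all t ∈ {1,…,T−1}. Then Σ_{t=1}^{T−1} k_t ≤ (T−1)·(1 + (2√2·ηαRF + η²F²)/ε²). -/
lemma telescope_Icc (f : ℕ → ℝ) (n : ℕ) :
    ∑ t ∈ Finset.Icc 1 n, (f t - f (t + 1)) = f 1 - f (n + 1) := by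
  induction n with
  | zero => simp
  | succ n ih =>
    rw [Finset.sum_Icc_succ_top (by omega : 1 ≤ n + 1), ih]
    ring

/-- Oracle-complexity bound of the full-information algorithm: if the
distances `D t` of the iterates from `conv(αK)` satisfy the per-round recursion
`D(t+1)² ≤ (D t + ηF)² − (k t − 1)ε²`, start at `D 1 = 0` and remain bounded by
`√2·αR`, then the total number of projection iterations is at most
`(T−1)·(1 + (2√2·ηαRF + η²F²)/ε²)`. -/
theorem full_info_oracle_complexity (α R F η ε : ℝ) (T : ℕ)
    (hα : 0 ≤ α) (hR : 0 ≤ R) (hF : 0 ≤ F) (hη : 0 ≤ η) (hε : 0 < ε) (hT : 2 ≤ T)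
    (D : ℕ → ℝ) (k : ℕ → ℕ)
    (hDnonneg : ∀ t ∈ Finset.Icc 1 T, 0 ≤ D t)
    (hD1 : D 1 = 0)
    (hDbound : ∀ t ∈ Finset.Icc 1 T, D t ≤ Real.sqrt 2 * α * R)
    (hrec : ∀ t ∈ Finset.Icc 1 (T - 1),
      (D (t + 1)) ^ 2 ≤ (D t + η * F) ^ 2 - ((k t : ℝ) - 1) * ε ^ 2) :
    (∑ t ∈ Finset.Icc 1 (T - 1), (k t : ℝ)) ≤
      ((T : ℝ) - 1) * (1 + (2 * Real.sqrt 2 * η * α * R * F + η ^ 2 * F ^ 2) / ε ^ 2) := by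
  set B : ℝ := 2 * Real.sqrt 2 * η * α * R * F + η ^ 2 * F ^ 2 with hB
  have hε2 : (0:ℝ) < ε ^ 2 := by positivity
  -- pointwise bound
  have key : ∀ t ∈ Finset.Icc 1 (T - 1),
      (k t : ℝ) * ε ^ 2 ≤ (D t ^ 2 - D (t + 1) ^ 2) + (B + ε ^ 2) := by
    intro t ht
    have ht' : t ∈ Finset.Icc 1 T := by
      simp only [Finset.mem_Icc] at ht ⊢; omega
    have h1 := hrec t ht
    have h2 : D t ≤ Real.sqrt 2 * α * R := hDbound t ht'
    have h3 : 2 * (η * F) * D t ≤ 2 * Real.sqrt 2 * η * α * R * F := by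
      have := mul_le_mul_of_nonneg_left h2 (by positivity : (0:ℝ) ≤ 2 * (η * F))
      nlinarith
    nlinarith [h1, h3]
  have hsum := Finset.sum_le_sum key
  have htel : ∑ t ∈ Finset.Icc 1 (T - 1),
      ((D t ^ 2 - D (t + 1) ^ 2) + (B + ε ^ 2))
      = (D 1 ^ 2 - D T ^ 2) + ((T:ℝ) - 1) * (B + ε ^ 2) := by
    rw [Finset.sum_add_distrib, telescope_Icc (fun t => D t ^ 2) (T - 1),
      Finset.sum_const, Nat.card_Icc]
    simp only [Nat.add_sub_cancel, nsmul_eq_mul]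
    have h1 : T - 1 + 1 = T := by omega
    have h2 : ((T - 1 : ℕ) : ℝ) = (T:ℝ) - 1 := by
      rw [Nat.cast_sub (by omega)]; norm_num
    rw [h1, h2]
  have hDT : 0 ≤ D T ^ 2 := sq_nonneg _
  have hsum' : (∑ t ∈ Finset.Icc 1 (T - 1), (k t : ℝ)) * ε ^ 2
      ≤ ((T:ℝ) - 1) * (B + ε ^ 2) := by
    rw [Finset.sum_mul]
    calc ∑ t ∈ Finset.Icc 1 (T - 1), (k t : ℝ) * ε ^ 2
        ≤ (D 1 ^ 2 - D T ^ 2) + ((T:ℝ) - 1) * (B + ε ^ 2) := htel ▸ hsum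
      _ ≤ ((T:ℝ) - 1) * (B + ε ^ 2) := by rw [hD1]; nlinarith
  rw [← sub_nonneg] at hsum' ⊢
  have : ((T : ℝ) - 1) * (1 + B / ε ^ 2) - ∑ t ∈ Finset.Icc 1 (T - 1), (k t : ℝ)
      = (((T:ℝ) - 1) * (B + ε ^ 2) - (∑ t ∈ Finset.Icc 1 (T - 1), (k t : ℝ)) * ε ^ 2) / ε ^ 2 := by
    field_simp; ring
  rw [this]
  exact div_nonneg hsum' hε2.le
end
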